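/- arXiv:1308.1971 — 4 statements merged into one kernel-verified Lean document; each statement's English description precedes it below -/
import Mathlib

section
/- Let V be a finite set with a distinguished root i, let E_i ⊆ V × V be a set of directed edges, let (u_p, u_c) ∈ E_i, and let u ∈ V be a node with u ≠ u_p and u ≠ u_c. Let E_i' = (E_i ∖ {(u_p, u_c)}) ∪ {(u_p, u), (u, u_c)}. Then every node reachable from i by a directed path in E_i is reachable from i by a directed path in E_i'; moreover, if u_p is reachable from i in E_i, then u is reachable from i in E_i'. -/
/-!
Reachability through duplicate-free paths coincides with the reflexive-transitive closure
of the edge relation, since a walk can always be cut down to a path. Each edge of `E_i` is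
either kept in `E_i'` or, in the case of `(u_p, u_c)`, replaced by the walk `u_p → u → u_c`,
so the closure of `E_i` is contained in that of `E_i'`; one more edge `(u_p, u)` reaches `u`.
-/

namespace P2P

/-- `l` is a directed path from `r` to `u` in the edge set `E`: a nonempty list
of pairwise distinct vertices starting at `r`, ending at `u`, each consecutive
pair being an edge of `E`. (In particular `r` is reachable from itself via `[r]`.) -/
def IsPath {α : Type*} (E : Finset (α × α)) (r u : α) (l : List α) : Prop :=
  l.Chain' (fun a b => (a, b) ∈ E) ∧ l.Nodup ∧ l.head? = some r ∧ l.getLast? = some u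

/-- `w` is reachable from `r` in `E`. -/
def Reach {α : Type*} (E : Finset (α × α)) (r w : α) : Prop :=
  ∃ l : List α, IsPath E r w l

open Relation

section Reach

variable {α : Type*} {E : Finset (α × α)} {r a b : α}

theorem Reach.refl (E : Finset (α × α)) (r : α) : Reach E r r :=
  ⟨[r], List.isChain_singleton r, List.nodup_singleton r, rfl, rfl⟩

/-- If `b` already lies on the path to `a`, the path is cut off at `b` instead of extended. -/
theorem Reach.tail (h : Reach E r a) (hab : (a, b) ∈ E) : Reach E r b := by
  obtain ⟨l, hchain, hnodup, hhead, hlast⟩ := h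
  have hne : l ≠ [] := by rintro rfl; simp at hhead
  by_cases hb : b ∈ l
  · obtain ⟨s, t, rfl⟩ := List.append_of_mem hb
    refine ⟨s ++ [b], hchain.prefix ⟨t, by simp⟩, ?_, ?_, by simp⟩
    · exact hnodup.sublist ((List.cons_sublist_cons.mpr (List.nil_sublist t)).append_left s)
    · cases s <;> simp_all
  · refine ⟨l ++ [b], ?_, ?_, ?_, by simp⟩
    · refine List.isChain_append.mpr ⟨hchain, List.isChain_singleton b, ?_⟩
      simp only [hlast, List.head?_cons, Option.mem_some_iff]
      rintro x rfl y rfl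
      exact hab
    · simpa [List.nodup_append] using ⟨hnodup, fun c hc hcb => hb (hcb ▸ hc)⟩
    · rwa [List.head?_append_of_ne_nil _ hne]

theorem reach_of_reflTransGen (h : ReflTransGen (fun a b => (a, b) ∈ E) r a) : Reach E r a := by
  induction h with
  | refl => exact Reach.refl E r
  | tail _ hedge ih => exact ih.tail hedge

theorem reflTransGen_of_reach (h : Reach E r a) : ReflTransGen (fun a b => (a, b) ∈ E) r a := by
  obtain ⟨_ | ⟨c, l⟩, hchain, -, hhead, hlast⟩ := h
  · simp at hhead
  · obtain rfl : c = r := by simpa using hhead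
    refine List.relationReflTransGen_of_exists_isChain_cons l hchain ?_
    simpa [List.getLast?_eq_some_getLast (List.cons_ne_nil c l)] using hlast

theorem reach_iff_reflTransGen : Reach E r a ↔ ReflTransGen (fun a b => (a, b) ∈ E) r a :=
  ⟨reflTransGen_of_reach, reach_of_reflTransGen⟩

end Reach

theorem reflTransGen_subdivide_of_mem {α : Type*} [DecidableEq α] {E : Finset (α × α)}
    {up uc u a b : α} (hab : (a, b) ∈ E) :
    ReflTransGen (fun a b => (a, b) ∈ insert (up, u) (insert (u, uc) (E.erase (up, uc))))
      a b := by
  by_cases h : (a, b) = (up, uc)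
  · obtain ⟨rfl, rfl⟩ := Prod.mk.inj h
    exact (ReflTransGen.single (b := u) (by simp)).tail (by simp)
  · exact ReflTransGen.single (by simp [h, hab])

theorem insert_preserves_reachability_general
    {α : Type*} [DecidableEq α]
    (i : α) (Ei : Finset (α × α)) (up uc u : α)
    (Ei' : Finset (α × α))
    (hEi' : Ei' = insert (up, u) (insert (u, uc) (Ei.erase (up, uc)))) :
    (∀ w : α, Reach Ei i w → Reach Ei' i w) ∧
    (Reach Ei i up → Reach Ei' i u) := by
  have hclosure : ∀ w, Reach Ei i w → Reach Ei' i w := fun w hw => by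
    rw [hEi', reach_iff_reflTransGen]
    exact reflTransGen_closed (fun _ _ => reflTransGen_subdivide_of_mem) _ _
      (reach_iff_reflTransGen.mp hw)
  exact ⟨hclosure, fun hup => (hclosure up hup).tail (by simp [hEi'])⟩

/-- replacing an edge `(u_p, u_c)` by the two edges `(u_p, u)` and
`(u, u_c)` preserves reachability from the root `i`, and makes `u` reachable
whenever `u_p` was. -/
theorem insert_preserves_reachability
    {α : Type*} [Fintype α] [DecidableEq α]
    (i : α) (Ei : Finset (α × α)) (up uc u : α)
    (hedge : (up, uc) ∈ Ei) (hup : u ≠ up) (huc : u ≠ uc)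
    (Ei' : Finset (α × α))
    (hEi' : Ei' = insert (up, u) (insert (u, uc) (Ei.erase (up, uc)))) :
    (∀ w : α, Reach Ei i w → Reach Ei' i w) ∧
    (Reach Ei i up → Reach Ei' i u) :=
  insert_preserves_reachability_general i Ei up uc u Ei' hEi'

end P2P
end

section
/- Let β > 0 be real, k ∈ ℕ, and let y_0, y_1, …, y_k : [0, ∞) → ℝ be differentiable functions satisfying y_0(0) = 1, y_m(0) ≥ 0 for all 0 ≤ m ≤ k, and y_m'(t) = β · max(1 + 2·y_{m−1}(t) − y_m(t), 0) for all t ≥ 0 and 0 ≤ m ≤ k, where y_{−1} denotes the identically zero function. Then for every 0 ≤ m ≤ k and every t ≥ 0, y_m(t) ≥ 2^{m+1} · (1 − e^{−βt} Σ_{p=0}^{m−1} (βt)^p / p!) − 1. -/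
/-!
The explicit function `g_m(t) = 2^{m+1} (1 - E_m(βt)) - 1`, with `E_m(x) = e^{-x} Σ_{p<m} x^p/p!`,
solves the linear system `g_m' = β (1 + 2 g_{m-1} - g_m)`, because `E_{m+1}' = E_m - E_{m+1}`.
Since `y_m' = β (1 + 2 y_{m-1} - y_m)⁺ ≥ β (1 + 2 y_{m-1} - y_m)` and, by induction on `m`,
`y_{m-1} ≥ g_{m-1}`, the difference `h = y_m - g_m` satisfies `h' ≥ -β h` with `h(0) ≥ 0`;
then `e^{βt} h(t)` is nondecreasing, so `h ≥ 0`.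
-/

open Finset Set Real

theorem nonneg_of_hasDerivWithinAt_ge_neg_mul {f f' : ℝ → ℝ} {a c : ℝ}
    (hf : ∀ t ∈ Ici a, HasDerivWithinAt f (f' t) (Ici a) t)
    (hf' : ∀ t ∈ Ici a, -c * f t ≤ f' t) (ha : 0 ≤ f a) :
    ∀ t ∈ Ici a, 0 ≤ f t := by
  have hφ : ∀ t ∈ Ici a, HasDerivWithinAt (fun s => exp (s * c) * f s)
      (exp (t * c) * (c * f t + f' t)) (Ici a) t := fun t ht =>
    ((hasDerivAt_mul_const c).exp.hasDerivWithinAt.fun_mul (hf t ht)).congr_deriv (by ring)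
  have hmono : MonotoneOn (fun s => exp (s * c) * f s) (Ici a) :=
    monotoneOn_of_hasDerivWithinAt_nonneg (convex_Ici a)
      (fun t ht => (hφ t ht).continuousWithinAt)
      (fun t ht => (hφ t (interior_subset ht)).mono interior_subset)
      (fun t ht => mul_nonneg (exp_pos _).le (by linarith [hf' t (interior_subset ht)]))
  intro t ht
  have hle := hmono self_mem_Ici ht ht
  exact nonneg_of_mul_nonneg_right (le_trans (by positivity) hle) (exp_pos _)

theorem le_of_hasDerivWithinAt_max_of_le {u v y g : ℝ → ℝ} {a β : ℝ} (hβ : 0 ≤ β)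
    (hy : ∀ t ∈ Ici a, HasDerivWithinAt y (β * max (1 + 2 * u t - y t) 0) (Ici a) t)
    (hg : ∀ t ∈ Ici a, HasDerivWithinAt g (β * (1 + 2 * v t - g t)) (Ici a) t)
    (hvu : ∀ t ∈ Ici a, v t ≤ u t) (ha : g a ≤ y a) :
    ∀ t ∈ Ici a, g t ≤ y t := by
  have hdiff := nonneg_of_hasDerivWithinAt_ge_neg_mul (c := β)
    (fun t ht => (hy t ht).fun_sub (hg t ht)) (fun t ht => ?_) (sub_nonneg.2 ha)
  · exact fun t ht => sub_nonneg.1 (hdiff t ht)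
  have hmax := le_max_left (1 + 2 * u t - y t) 0
  nlinarith [hvu t ht]

/-- `P[Poisson(x) < m]`. -/
noncomputable def poissonLowerTail (m : ℕ) (x : ℝ) : ℝ :=
  exp (-x) * ∑ p ∈ range m, x ^ p / p.factorial

theorem hasDerivAt_sum_range_pow_div_factorial (m : ℕ) (x : ℝ) :
    HasDerivAt (fun x : ℝ => ∑ p ∈ range (m + 1), x ^ p / p.factorial)
      (∑ p ∈ range m, x ^ p / p.factorial) x := by
  induction m with
  | zero => simpa using hasDerivAt_const x (1 : ℝ)
  | succ m ih =>
    simp_rw [sum_range_succ _ (m + 1)]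
    refine (ih.fun_add ((hasDerivAt_pow (m + 1) x).div_const ((m + 1).factorial : ℝ))).congr_deriv ?_
    rw [sum_range_succ, Nat.factorial_succ, Nat.cast_mul, Nat.add_sub_cancel]
    field_simp

theorem hasDerivAt_poissonLowerTail_succ (m : ℕ) (x : ℝ) :
    HasDerivAt (poissonLowerTail (m + 1))
      (poissonLowerTail m x - poissonLowerTail (m + 1) x) x :=
  ((hasDerivAt_neg x).exp.fun_mul (hasDerivAt_sum_range_pow_div_factorial m x)).congr_deriv
    (by simp only [poissonLowerTail]; ring)

theorem poissonLowerTail_zero_left : poissonLowerTail 0 = 0 := by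
  ext x; simp [poissonLowerTail]

theorem poissonLowerTail_succ_zero (m : ℕ) : poissonLowerTail (m + 1) 0 = 1 := by
  simp [poissonLowerTail, sum_range_succ']

noncomputable def lowerSolution (β : ℝ) (m : ℕ) (t : ℝ) : ℝ :=
  2 ^ (m + 1) * (1 - poissonLowerTail m (β * t)) - 1

theorem lowerSolution_zero (β : ℝ) : lowerSolution β 0 = fun _ => 1 := by
  ext t; simp [lowerSolution, poissonLowerTail_zero_left]; norm_num

theorem lowerSolution_succ_zero (β : ℝ) (m : ℕ) : lowerSolution β (m + 1) 0 = -1 := by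
  simp [lowerSolution, poissonLowerTail_succ_zero]

theorem hasDerivAt_lowerSolution_succ (β : ℝ) (m : ℕ) (t : ℝ) :
    HasDerivAt (lowerSolution β (m + 1))
      (β * (1 + 2 * lowerSolution β m t - lowerSolution β (m + 1) t)) t := by
  have hE := (hasDerivAt_poissonLowerTail_succ m (β * t)).comp t ((hasDerivAt_id t).const_mul β)
  refine (((hE.const_sub 1).const_mul (2 ^ (m + 2) : ℝ)).sub_const 1).congr_deriv ?_
  simp only [lowerSolution]; ring

/-- the solution of the ODE system
`y_m' = β·(1 + 2 y_{m−1} − y_m)⁺` on `[0, ∞)` with `y_0(0) = 1`, `y_m(0) ≥ 0`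
and `y_{−1} ≡ 0` satisfies
`y_m(t) ≥ 2^{m+1}·(1 − e^{−βt} Σ_{p<m} (βt)^p/p!) − 1`. -/
theorem ode_lower_bound
    (β : ℝ) (hβ : 0 < β) (k : ℕ) (y : ℕ → ℝ → ℝ)
    (hy00 : y 0 0 = 1)
    (hy0 : ∀ m ≤ k, 0 ≤ y m 0)
    (hode : ∀ m ≤ k, ∀ t ∈ Set.Ici (0 : ℝ),
      HasDerivWithinAt (y m)
        (β * max (1 + 2 * (if m = 0 then 0 else y (m - 1) t) - y m t) 0)
        (Set.Ici (0 : ℝ)) t) :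
    ∀ m ≤ k, ∀ t ∈ Set.Ici (0 : ℝ),
      2 ^ (m + 1) *
          (1 - Real.exp (-(β * t)) *
            ∑ p ∈ Finset.range m, (β * t) ^ p / (Nat.factorial p)) - 1 ≤ y m t := by
  intro m hm
  show ∀ t ∈ Set.Ici (0 : ℝ), lowerSolution β m t ≤ y m t
  induction m with
  | zero =>
    rw [lowerSolution_zero]
    refine le_of_hasDerivWithinAt_max_of_le hβ.le (u := 0) (v := 0)
      (fun t ht => by simpa using hode 0 hm t ht) (fun t _ => ?_) (fun _ _ => le_rfl) hy00.ge
    simpa using hasDerivWithinAt_const t (Set.Ici 0) (1 : ℝ)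
  | succ m ih =>
    refine le_of_hasDerivWithinAt_max_of_le hβ.le (fun t ht => by simpa using hode (m + 1) hm t ht)
      (fun t _ => (hasDerivAt_lowerSolution_succ β m t).hasDerivWithinAt) (ih (by omega)) ?_
    rw [lowerSolution_succ_zero]
    linarith [hy0 (m + 1) hm]
end

section
/- Let k ∈ ℕ and let δ_0, …, δ_k and θ_0, …, θ_k : [0, ∞) → ℝ be differentiable functions such that δ_0'(t) ≤ −δ_0(t) and δ_m'(t) ≤ δ_{m−1}(t) − δ_m(t) for 1 ≤ m ≤ k and all t ≥ 0, θ_0'(t) = −θ_0(t) and θ_m'(t) = θ_{m−1}(t) − θ_m(t) for 1 ≤ m ≤ k and all t ≥ 0, and δ_m(0) = θ_m(0) for all 0 ≤ m ≤ k. Then δ_m(t) ≤ θ_m(t) for every 0 ≤ m ≤ k and every t ≥ 0. -/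
/-! Induction on `m`. The difference `g = δ_m - θ_m` vanishes at `0` and satisfies
`g' ≤ (δ_{m-1} - θ_{m-1}) - g ≤ -g`, the source term being nonpositive by the induction
hypothesis (and absent for `m = 0`); Grönwall's inequality with rate `-1` and zero initial
bound then gives `g ≤ 0`. -/

open Set

theorem nonpos_of_hasDerivWithinAt_le_neg {f f' : ℝ → ℝ} {a : ℝ}
    (hf : ∀ t ∈ Ici a, HasDerivWithinAt f (f' t) (Ici a) t)
    (hf' : ∀ t ∈ Ici a, f' t ≤ -f t) (ha : f a ≤ 0) :
    ∀ t ∈ Ici a, f t ≤ 0 := by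
  intro t ht
  have hright : ∀ x ∈ Ico a t, HasDerivWithinAt f (f' x) (Ici x) x := fun x hx =>
    (hf x hx.1).mono (Ici_subset_Ici.2 hx.1)
  have hcont : ContinuousOn f (Icc a t) := fun x hx =>
    (hf x hx.1).continuousWithinAt.mono Icc_subset_Ici_self
  have bound := le_gronwallBound_of_liminf_deriv_right_le (K := -1) (ε := 0) hcont
    (fun x hx _ hr => (hright x hx).liminf_right_slope_le hr) ha
    (fun x hx => by simpa using hf' x hx.1) t ⟨ht, le_rfl⟩
  rwa [gronwallBound_ε0_δ0] at bound

theorem le_of_hasDerivWithinAt_sub_le {f g f' g' : ℝ → ℝ} {a : ℝ}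
    (hf : ∀ t ∈ Ici a, HasDerivWithinAt f (f' t) (Ici a) t)
    (hg : ∀ t ∈ Ici a, HasDerivWithinAt g (g' t) (Ici a) t)
    (hfg' : ∀ t ∈ Ici a, f' t - g' t ≤ g t - f t) (ha : f a ≤ g a) :
    ∀ t ∈ Ici a, f t ≤ g t := by
  have key := nonpos_of_hasDerivWithinAt_le_neg (f := f - g) (fun t ht => (hf t ht).sub (hg t ht))
    (fun t ht => by simpa using hfg' t ht) (sub_nonpos.2 ha)
  exact fun t ht => sub_nonpos.1 (key t ht)

/-- comparison principle on `[0, ∞)`: solutions of the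
differential inequalities `δ_0' ≤ −δ_0`, `δ_m' ≤ δ_{m−1} − δ_m` are dominated by
the solution of the corresponding equalities with the same initial data. -/
theorem ode_comparison
    (k : ℕ) (δ θ δ' : ℕ → ℝ → ℝ)
    (hδdiff : ∀ m ≤ k, ∀ t ∈ Set.Ici (0 : ℝ),
      HasDerivWithinAt (δ m) (δ' m t) (Set.Ici (0 : ℝ)) t)
    (hδ0 : ∀ t ∈ Set.Ici (0 : ℝ), δ' 0 t ≤ -(δ 0 t))
    (hδm : ∀ m : ℕ, 1 ≤ m → m ≤ k → ∀ t ∈ Set.Ici (0 : ℝ),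
      δ' m t ≤ δ (m - 1) t - δ m t)
    (hθ0 : ∀ t ∈ Set.Ici (0 : ℝ),
      HasDerivWithinAt (θ 0) (-(θ 0 t)) (Set.Ici (0 : ℝ)) t)
    (hθm : ∀ m : ℕ, 1 ≤ m → m ≤ k → ∀ t ∈ Set.Ici (0 : ℝ),
      HasDerivWithinAt (θ m) (θ (m - 1) t - θ m t) (Set.Ici (0 : ℝ)) t)
    (hinit : ∀ m ≤ k, δ m 0 = θ m 0) :
    ∀ m ≤ k, ∀ t ∈ Set.Ici (0 : ℝ), δ m t ≤ θ m t := by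
  intro m
  induction m with
  | zero =>
    intro hm
    exact le_of_hasDerivWithinAt_sub_le (hδdiff 0 hm) hθ0
      (fun t ht => by linarith [hδ0 t ht]) (hinit 0 hm).le
  | succ n ih =>
    intro hm
    have hδsucc : ∀ t ∈ Ici (0 : ℝ), δ' (n + 1) t ≤ δ n t - δ (n + 1) t :=
      hδm (n + 1) n.succ_pos hm
    have hθsucc : ∀ t ∈ Ici (0 : ℝ),
        HasDerivWithinAt (θ (n + 1)) (θ n t - θ (n + 1) t) (Ici 0) t :=
      hθm (n + 1) n.succ_pos hm
    exact le_of_hasDerivWithinAt_sub_le (hδdiff (n + 1) hm) hθsucc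
      (fun t ht => by linarith [hδsucc t ht, ih (n.le_succ.trans hm) t ht]) (hinit (n + 1) hm).le
end

section
/- In the rooted capacity model, for every integer i ≥ 0: 2 · #{u ∈ V : L(u) ≤ i and d(u) < d̄_u} ≥ 1 + 2·Z_{i−1} − Z_i, where Z_{−1} = 0. -/
/-!
Every node at depth `≤ i - 1` sends its out-edges to distinct non-root nodes at depth `≤ i`,
because in-degrees are at most one and the root has none; hence the out-degrees over
`Z_{i-1}` sum to less than `Z_i`. A node of `Z_{i-1}` that is not available has out-degree
at least its cap, hence at least `2`, so at most `(Z_i - 1) / 2` nodes of `Z_{i-1}` are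
unavailable and the rest are available nodes of depth `≤ i`.
-/

namespace P2P

/-- A walk of length `n` from `r` to `u` in the edge set `E`. -/
def Walk {α : Type*} (E : Finset (α × α)) (r u : α) (n : ℕ) : Prop :=
  ∃ f : ℕ → α, f 0 = r ∧ f n = u ∧ ∀ k < n, (f k, f (k + 1)) ∈ E

/-- Depth of `u` below root `r`: minimal number of edges of a directed walk
(equivalently, of a directed path) from `r` to `u`; `⊤` if unreachable. -/
noncomputable def depth {α : Type*} (E : Finset (α × α)) (r u : α) : ℕ∞ :=
  sInf {n : ℕ∞ | ∃ m : ℕ, n = (m : ℕ∞) ∧ Walk E r u m}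

/-- Out-degree of `u` in `E`. -/
def outDeg {α : Type*} [DecidableEq α] (E : Finset (α × α)) (u : α) : ℕ :=
  (E.filter fun e => e.1 = u).card

/-- In-degree of `u` in `E`. -/
def inDeg {α : Type*} [DecidableEq α] (E : Finset (α × α)) (u : α) : ℕ :=
  (E.filter fun e => e.2 = u).card

open Finset

section Depth

variable {α : Type*} {E : Finset (α × α)} {r : α}

lemma Walk.nil (E : Finset (α × α)) (r : α) : Walk E r r 0 :=
  ⟨fun _ => r, rfl, rfl, by simp⟩

lemma Walk.snoc {a b : α} {m : ℕ} (h : Walk E r a m) (he : (a, b) ∈ E) :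
    Walk E r b (m + 1) := by
  obtain ⟨f, h0, hm, hedge⟩ := h
  refine ⟨fun k => if k ≤ m then f k else b, by simp [h0], by simp, fun k hk => ?_⟩
  rcases Nat.lt_or_ge k m with hkm | hkm
  · simpa [hkm.le, Nat.succ_le_of_lt hkm] using hedge k hkm
  · obtain rfl : k = m := by omega
    simpa [hm] using he

lemma depth_le_iff {u : α} {n : ℕ} : depth E r u ≤ n ↔ ∃ m ≤ n, Walk E r u m := by
  constructor
  · intro h
    by_contra! hc
    have hlt : ((n + 1 : ℕ) : ℕ∞) ≤ depth E r u := by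
      refine le_sInf fun x ⟨m, hx, hw⟩ => ?_
      rw [hx]
      exact_mod_cast Nat.succ_le_of_lt (not_le.mp fun hle => hc m hle hw)
    exact absurd (hlt.trans h) (by norm_cast; omega)
  · rintro ⟨m, hm, hw⟩
    exact (sInf_le ⟨m, rfl, hw⟩ : depth E r u ≤ m).trans (by exact_mod_cast hm)

lemma depth_self_le (n : ℕ) : depth E r r ≤ n :=
  depth_le_iff.mpr ⟨0, n.zero_le, Walk.nil E r⟩

lemma depth_le_succ_of_mem {a b : α} {n : ℕ} (ha : depth E r a ≤ n) (he : (a, b) ∈ E) :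
    depth E r b ≤ (n + 1 : ℕ) := by
  obtain ⟨m, hm, hw⟩ := depth_le_iff.mp ha
  exact depth_le_iff.mpr ⟨m + 1, by omega, hw.snoc he⟩

end Depth

section Degrees

variable {α : Type*} [DecidableEq α] {E : Finset (α × α)}

lemma injOn_snd_of_inDeg_le_one (hone : ∀ w, inDeg E w ≤ 1) :
    Set.InjOn Prod.snd (E : Set (α × α)) := fun e₁ h₁ e₂ h₂ hsnd =>
  card_le_one.mp (hone e₁.2) e₁ (mem_filter.mpr ⟨h₁, rfl⟩) e₂ (mem_filter.mpr ⟨h₂, hsnd.symm⟩)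

lemma snd_ne_of_inDeg_eq_zero {r : α} (hr : inDeg E r = 0) {e : α × α} (he : e ∈ E) :
    e.2 ≠ r := fun h =>
  (card_pos.mpr ⟨e, mem_filter.mpr ⟨he, h⟩⟩).ne' hr

lemma sum_outDeg_eq_card_filter (B : Finset α) :
    ∑ u ∈ B, outDeg E u = #{e ∈ E | e.1 ∈ B} :=
  sum_card_fiberwise_eq_card_filter E B Prod.fst

lemma sum_outDeg_lt_card {r : α} (hone : ∀ w, inDeg E w ≤ 1) (hroot : inDeg E r = 0)
    {A B : Finset α} (hr : r ∈ A) (hclosed : ∀ e ∈ E, e.1 ∈ B → e.2 ∈ A) :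
    ∑ u ∈ B, outDeg E u < #A := by
  rw [sum_outDeg_eq_card_filter]
  calc #{e ∈ E | e.1 ∈ B} ≤ #(A.erase r) := by
        refine card_le_card_of_injOn Prod.snd (fun e he => ?_)
          ((injOn_snd_of_inDeg_le_one hone).mono (coe_subset.mpr (filter_subset _ E)))
        obtain ⟨hE, hB⟩ := mem_filter.mp he
        exact mem_erase.mpr ⟨snd_ne_of_inDeg_eq_zero hroot hE, hclosed e hE hB⟩
    _ < #A := card_erase_lt_of_mem hr

lemma two_mul_card_add_one_le {r : α} (hone : ∀ w, inDeg E w ≤ 1) (hroot : inDeg E r = 0)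
    (dbar : α → ℕ) (hdbar : ∀ u, 2 ≤ dbar u) {A B : Finset α} (hr : r ∈ A) (hBA : B ⊆ A)
    (hclosed : ∀ e ∈ E, e.1 ∈ B → e.2 ∈ A) :
    2 * #B + 1 ≤ #A + 2 * #{u ∈ A | outDeg E u < dbar u} := by
  have hfull : 2 * #{u ∈ B | ¬outDeg E u < dbar u} ≤ ∑ u ∈ B, outDeg E u :=
    calc 2 * #{u ∈ B | ¬outDeg E u < dbar u}
        ≤ ∑ u ∈ B with ¬outDeg E u < dbar u, outDeg E u := by
          rw [mul_comm, ← smul_eq_mul]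
          exact card_nsmul_le_sum _ _ _ fun u hu =>
            (hdbar u).trans (not_lt.mp (mem_filter.mp hu).2)
      _ ≤ ∑ u ∈ B, outDeg E u := sum_le_sum_of_subset (filter_subset _ B)
  have hsplit := card_filter_add_card_filter_not (s := B) fun u => outDeg E u < dbar u
  have havail := card_le_card (filter_subset_filter (fun u => outDeg E u < dbar u) hBA)
  have hlt := sum_outDeg_lt_card hone hroot hr hclosed
  omega

end Degrees

lemma natCard_subtype_eq_card_filter {α : Type*} [Fintype α] (p : α → Prop) [DecidablePred p] :
    Nat.card {u // p u} = #{u | p u} := by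
  rw [Nat.card_eq_fintype_card, Fintype.card_subtype]

theorem available_nodes_lower_bound_general
    {α : Type*} [Fintype α] [DecidableEq α]
    (r : α) (E : Finset (α × α))
    (hone : ∀ w : α, inDeg E w ≤ 1)
    (hrootin : inDeg E r = 0)
    (dbar : α → ℕ) (hdbar : ∀ u : α, 2 ≤ dbar u)
    (i : ℕ) :
    (1 : ℤ) +
        2 * (if i = 0 then 0 else
          (Nat.card {u : α // depth E r u ≤ ((i - 1 : ℕ) : ℕ∞)} : ℤ)) -
        (Nat.card {u : α // depth E r u ≤ (i : ℕ∞)} : ℤ) ≤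
      2 * (Nat.card {u : α // depth E r u ≤ (i : ℕ∞) ∧ outDeg E u < dbar u} : ℤ) := by
  simp only [natCard_subtype_eq_card_filter, ← filter_filter]
  have hr : r ∈ ({u | depth E r u ≤ i} : Finset α) := by simpa using depth_self_le i
  have key := fun B => two_mul_card_add_one_le hone hrootin dbar hdbar (B := B) hr
  rcases i with _ | k
  · have := key ∅ (empty_subset _) (by simp)
    rw [card_empty] at this
    rw [if_pos rfl]
    omega
  · have := key {u | depth E r u ≤ k}
      (fun u hu => mem_filter.mpr
        ⟨mem_univ u, (mem_filter.mp hu).2.trans (by exact_mod_cast k.le_succ)⟩)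
      fun e he he₁ => by simpa using depth_le_succ_of_mem (mem_filter.mp he₁).2 he
    simp only [Nat.add_sub_cancel, if_neg k.succ_ne_zero]
    omega

/-- in the rooted capacity model (at most one incoming edge per
node, none at the root, degree caps `d̄_u ≥ 2`), for every `i ≥ 0`,
`2·#{u : L(u) ≤ i, d(u) < d̄_u} ≥ 1 + 2·Z_{i−1} − Z_i`, where `Z_{−1} = 0`. -/
theorem available_nodes_lower_bound
    {α : Type*} [Fintype α] [DecidableEq α]
    (r : α) (E : Finset (α × α))
    (hdist : ∀ e ∈ E, e.1 ≠ e.2)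
    (hone : ∀ w : α, inDeg E w ≤ 1)
    (hrootin : inDeg E r = 0)
    (dbar : α → ℕ) (hdbar : ∀ u : α, 2 ≤ dbar u)
    (i : ℕ) :
    (1 : ℤ) +
        2 * (if i = 0 then 0 else
          (Nat.card {u : α // depth E r u ≤ ((i - 1 : ℕ) : ℕ∞)} : ℤ)) -
        (Nat.card {u : α // depth E r u ≤ (i : ℕ∞)} : ℤ) ≤
      2 * (Nat.card {u : α // depth E r u ≤ (i : ℕ∞) ∧ outDeg E u < dbar u} : ℤ) :=
  available_nodes_lower_bound_general r E hone hrootin dbar hdbar i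

end P2P
end
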